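/- Let X₁, ..., X_n be {0,1}-valued random variables distributed uniformly over binary vectors with exactly k ones, and let f : {0,1}^n → ℝ be 1-Lipschitz in the sense that changing any single coordinate changes f by at most 1. Then for all t > 0, P[|f(X) - E[f(X)]| ≥ t] ≤ 2·exp(-t²/(8k)). -/

import Mathlib

/-!
Identify the vectors with exactly `k` ones with the `k`-subsets of `Fin n` and reveal the random
set one element at a time. After revealing `v`, the conditional mean of `f` is the average `g v`
of `f` over the sets containing `v`; the overall mean is the average of the `g v`, and the
transposition `(v v')` matches the sets containing `v` with those containing `v'` at the cost of
one exchange, i.e. two unit changes of `f`, so `|g v - g v'| ≤ 2`. Hoeffding's lemma then bounds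
the exponential moment of each step by `exp (2 l ^ 2)`, so by induction the moment generating
function of `f - E` is at most `exp (2 k l ^ 2)`, and Chernoff's bound with `l = t / (4 k)` gives
`exp (-t ^ 2 / (8 k))` for each of the two tails.
-/

open Finset Real
open scoped BigOperators

lemma exp_mul_le_cosh_add_sinh {c x : ℝ} (hc : 0 < c) (hx : |x| ≤ c) (l : ℝ) :
    exp (l * x) ≤ cosh (l * c) + x / c * sinh (l * c) := by
  have ha : 0 ≤ (c - x) / (2 * c) := div_nonneg (by linarith [abs_le.1 hx]) (by positivity)
  have hb : 0 ≤ (c + x) / (2 * c) := div_nonneg (by linarith [abs_le.1 hx]) (by positivity)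
  have hab : (c - x) / (2 * c) + (c + x) / (2 * c) = 1 := by field_simp; ring
  have h := convexOn_exp.2 (Set.mem_univ (-(l * c))) (Set.mem_univ (l * c)) ha hb hab
  have hmix : (c - x) / (2 * c) * -(l * c) + (c + x) / (2 * c) * (l * c) = l * x := by
    field_simp; ring
  simp only [smul_eq_mul, hmix] at h
  rw [cosh_eq, sinh_eq]
  refine h.trans_eq ?_
  field_simp
  ring

/-- Hoeffding's lemma for the uniform distribution on `s`, in its symmetric form. -/
lemma expect_exp_mul_sub_expect_le {ι : Type*} (s : Finset ι) (w : ι → ℝ) {c : ℝ}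
    (hc : 0 < c) (hb : ∀ i ∈ s, |w i - 𝔼 j ∈ s, w j| ≤ c) (l : ℝ) :
    𝔼 i ∈ s, exp (l * (w i - 𝔼 j ∈ s, w j)) ≤ exp (l ^ 2 * c ^ 2 / 2) := by
  rcases s.eq_empty_or_nonempty with rfl | hs
  · simpa using (exp_pos _).le
  calc 𝔼 i ∈ s, exp (l * (w i - 𝔼 j ∈ s, w j))
      ≤ 𝔼 i ∈ s, (cosh (l * c) + (w i - 𝔼 j ∈ s, w j) / c * sinh (l * c)) :=
        expect_le_expect fun i hi => exp_mul_le_cosh_add_sinh hc (hb i hi) l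
    _ = cosh (l * c) := by
        rw [expect_add_distrib, expect_const hs, ← expect_mul, ← expect_div, expect_sub_distrib,
          expect_const hs, sub_self]
        simp
    _ ≤ exp (l ^ 2 * c ^ 2 / 2) := by simpa [mul_pow] using cosh_le_exp_half_sq (l * c)

lemma abs_sub_expect_le {ι : Type*} {s : Finset ι} {w : ι → ℝ} {d : ℝ} {i : ι}
    (hi : i ∈ s) (h : ∀ j ∈ s, |w i - w j| ≤ d) : |w i - 𝔼 j ∈ s, w j| ≤ d := by
  rw [← expect_const ⟨i, hi⟩ (w i), ← expect_sub_distrib]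
  exact (abs_expect_le _ _).trans (expect_le ⟨i, hi⟩ h)

section

variable {α : Type*} [DecidableEq α]

lemma sum_powersetCard_erase_insert {M : Type*} [AddCommMonoid M] (s : Finset α) (m : ℕ)
    (H : Finset α → M) {v : α} (hv : v ∈ s) :
    ∑ B ∈ (s.erase v).powersetCard m, H (insert v B) =
      ∑ C ∈ s.powersetCard (m + 1) with v ∈ C, H C := by
  refine sum_nbij' (insert v) (erase · v) (fun B hB => ?_) (fun C hC => ?_)
    (fun B hB => ?_) (fun C hC => ?_) fun _ _ => rfl
  all_goals simp only [mem_powersetCard, mem_filter, subset_erase] at *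
  · exact ⟨⟨insert_subset hv hB.1.1, by rw [card_insert_of_notMem hB.1.2, hB.2]⟩,
      mem_insert_self _ _⟩
  · exact ⟨⟨(erase_subset _ _).trans hC.1.1, notMem_erase _ _⟩,
      by rw [card_erase_of_mem hC.2, hC.1.2, Nat.add_sub_cancel]⟩
  · exact erase_insert hB.1.2
  · exact insert_erase hC.2

lemma succ_nsmul_sum_powersetCard_succ {M : Type*} [AddCommMonoid M] (s : Finset α) (m : ℕ)
    (H : Finset α → M) :
    (m + 1) • ∑ C ∈ s.powersetCard (m + 1), H C =
      ∑ v ∈ s, ∑ B ∈ (s.erase v).powersetCard m, H (insert v B) := by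
  rw [sum_congr rfl fun v hv => sum_powersetCard_erase_insert s m H hv,
    sum_comm' (t' := s.powersetCard (m + 1)) (s' := id) fun v C => ?_, smul_sum]
  · refine sum_congr rfl fun C hC => ?_
    rw [sum_const, id, (mem_powersetCard.1 hC).2]
  · simp only [mem_filter, mem_powersetCard, id]
    exact ⟨fun h => ⟨h.2.2, h.2.1⟩, fun h => ⟨h.2.1 h.1, h.2, h.1⟩⟩

lemma expect_powersetCard_succ {K : Type*} [Semifield K] [CharZero K] (s : Finset α) (m : ℕ)
    (H : Finset α → K) :
    𝔼 C ∈ s.powersetCard (m + 1), H C =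
      𝔼 v ∈ s, 𝔼 B ∈ (s.erase v).powersetCard m, H (insert v B) := by
  rcases s.eq_empty_or_nonempty with rfl | hs
  · simp [expect]
  obtain ⟨r, hr⟩ : ∃ r, #s = r + 1 := Nat.exists_eq_succ_of_ne_zero hs.card_pos.ne'
  have hcard : ∀ v ∈ s, #((s.erase v).powersetCard m) = r.choose m := fun v hv => by
    rw [card_powersetCard, card_erase_of_mem hv, hr, Nat.add_sub_cancel]
  have hchoose : ((r + 1) * r.choose m : K) = (m + 1) * (r + 1).choose (m + 1) := by
    exact_mod_cast (Nat.add_one_mul_choose_eq r m).trans (mul_comm _ _)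
  symm
  calc 𝔼 v ∈ s, 𝔼 B ∈ (s.erase v).powersetCard m, H (insert v B)
      = 𝔼 v ∈ s, (∑ B ∈ (s.erase v).powersetCard m, H (insert v B)) / r.choose m :=
        expect_congr rfl fun v hv => by rw [expect_eq_sum_div_card, hcard v hv]
    _ = ((m + 1) • ∑ C ∈ s.powersetCard (m + 1), H C) / ((r + 1) * r.choose m) := by
        rw [← expect_div, expect_eq_sum_div_card, succ_nsmul_sum_powersetCard_succ, hr, div_div,
          Nat.cast_add_one]
    _ = 𝔼 C ∈ s.powersetCard (m + 1), H C := by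
        rw [hchoose, nsmul_eq_mul, Nat.cast_add_one,
          mul_div_mul_left _ _ (Nat.cast_add_one_ne_zero m), expect_eq_sum_div_card,
          card_powersetCard, hr]

lemma map_swap_eq_self {D : Finset α} {v v' : α} (hv : v ∈ D) (hv' : v' ∈ D) :
    D.map (Equiv.swap v v').toEmbedding = D := by
  ext x
  rw [mem_map_equiv, Equiv.symm_swap, Equiv.swap_apply_def]
  split_ifs with h h' <;> simp_all

lemma map_swap_eq_insert_erase {D : Finset α} {v v' : α} (hv : v ∈ D) (hv' : v' ∉ D) :
    D.map (Equiv.swap v v').toEmbedding = insert v' (D.erase v) := by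
  ext x
  rw [mem_map_equiv, Equiv.symm_swap, Equiv.swap_apply_def]
  split_ifs with h h' <;> simp_all
  rintro rfl
  contradiction

variable {G : Finset α → ℝ} {c : ℝ}

lemma abs_sub_map_swap_le (hG : ∀ C v, |G (insert v C) - G C| ≤ c) {D : Finset α} {v : α}
    (hv : v ∈ D) (v' : α) : |G D - G (D.map (Equiv.swap v v').toEmbedding)| ≤ 2 * c := by
  by_cases hv' : v' ∈ D
  · rw [map_swap_eq_self hv hv', sub_self, abs_zero]
    linarith [(abs_nonneg _).trans (hG D v)]
  rw [map_swap_eq_insert_erase hv hv']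
  calc |G D - G (insert v' (D.erase v))|
      ≤ |G (insert v (D.erase v)) - G (D.erase v)| +
          |G (insert v' (D.erase v)) - G (D.erase v)| := by
        rw [insert_erase hv, abs_sub_comm (G (insert v' _))]; exact abs_sub_le _ _ _
    _ ≤ 2 * c := by linarith [hG (D.erase v) v, hG (D.erase v) v']

lemma abs_expect_insert_sub_expect_insert_le (hG : ∀ C v, |G (insert v C) - G C| ≤ c)
    {s : Finset α} (m : ℕ) {v v' : α} (hv : v ∈ s) (hv' : v' ∈ s) :
    |𝔼 B ∈ (s.erase v).powersetCard m, G (insert v B) -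
      𝔼 B ∈ (s.erase v').powersetCard m, G (insert v' B)| ≤ 2 * c := by
  set τ := Equiv.swap v v'
  have herase : (s.erase v).map τ.toEmbedding = s.erase v' := by
    rw [map_erase, map_swap_eq_self hv hv']; simp [τ]
  have hswap : 𝔼 B ∈ (s.erase v').powersetCard m, G (insert v' B) =
      𝔼 B ∈ (s.erase v).powersetCard m, G ((insert v B).map τ.toEmbedding) := by
    refine (expect_equiv τ.finsetCongr (fun B => ?_) fun B _ => ?_).symm
    · rw [Equiv.finsetCongr_apply, mem_powersetCard, mem_powersetCard, ← herase, map_subset_map,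
        card_map]
    · simp [τ, map_insert]
  rw [hswap, ← expect_sub_distrib]
  rcases ((s.erase v).powersetCard m).eq_empty_or_nonempty with hempty | hne
  · simpa [hempty] using (abs_nonneg _).trans (hG ∅ v)
  exact (abs_expect_le _ _).trans
    (expect_le hne fun B _ => abs_sub_map_swap_le hG (mem_insert_self v B) v')

lemma expect_powersetCard_exp_mul_sub_expect_le (hG : ∀ C v, |G (insert v C) - G C| ≤ c)
    (hc : 0 < c) (l : ℝ) (s : Finset α) (m : ℕ) :
    𝔼 B ∈ s.powersetCard m, exp (l * (G B - 𝔼 C ∈ s.powersetCard m, G C)) ≤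
      exp (2 * m * c ^ 2 * l ^ 2) := by
  induction m generalizing G s with
  | zero => simp
  | succ m ih =>
    set g := fun v => 𝔼 B ∈ (s.erase v).powersetCard m, G (insert v B)
    have hinsert : ∀ v, ∀ C u, |G (insert v (insert u C)) - G (insert v C)| ≤ c :=
      fun v C u => by rw [insert_comm]; exact hG _ _
    have hdev : ∀ v ∈ s, |g v - 𝔼 u ∈ s, g u| ≤ 2 * c := fun v hv =>
      abs_sub_expect_le hv fun u hu => abs_expect_insert_sub_expect_insert_le hG m hv hu
    rw [expect_powersetCard_succ s m G]
    calc 𝔼 C ∈ s.powersetCard (m + 1), exp (l * (G C - 𝔼 u ∈ s, g u))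
        = 𝔼 v ∈ s, exp (l * (g v - 𝔼 u ∈ s, g u)) *
            𝔼 B ∈ (s.erase v).powersetCard m, exp (l * (G (insert v B) - g v)) := by
          rw [expect_powersetCard_succ]
          refine expect_congr rfl fun v _ => ?_
          rw [mul_expect]
          refine expect_congr rfl fun B _ => ?_
          rw [← exp_add]; ring_nf
      _ ≤ 𝔼 v ∈ s, exp (l * (g v - 𝔼 u ∈ s, g u)) * exp (2 * m * c ^ 2 * l ^ 2) :=
          expect_le_expect fun v _ =>
            mul_le_mul_of_nonneg_left (ih (hinsert v) (s.erase v)) (exp_nonneg _)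
      _ ≤ exp (l ^ 2 * (2 * c) ^ 2 / 2) * exp (2 * m * c ^ 2 * l ^ 2) := by
          rw [← expect_mul]
          gcongr
          exact expect_exp_mul_sub_expect_le s g (by positivity) hdev l
      _ = exp (2 * (m + 1 : ℕ) * c ^ 2 * l ^ 2) := by
          rw [← exp_add]; push_cast; ring_nf

lemma card_filter_le_sub_expect_le (hG : ∀ C v, |G (insert v C) - G C| ≤ c) (hc : 0 < c)
    (s : Finset α) {m : ℕ} (hm : 0 < m) {t : ℝ} (ht : 0 ≤ t) :
    (#{B ∈ s.powersetCard m | t ≤ G B - 𝔼 C ∈ s.powersetCard m, G C} : ℝ) ≤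
      #(s.powersetCard m) * exp (-t ^ 2 / (8 * m * c ^ 2)) := by
  set P := s.powersetCard m
  set μ := 𝔼 C ∈ P, G C
  -- `l` minimises `2 * m * c ^ 2 * l ^ 2 - l * t`.
  set l := t / (4 * m * c ^ 2)
  have hl : 0 ≤ l := by positivity
  have hchernoff : (#{B ∈ P | t ≤ G B - μ} : ℝ) * exp (l * t) ≤
      #P * exp (2 * m * c ^ 2 * l ^ 2) :=
    calc (#{B ∈ P | t ≤ G B - μ} : ℝ) * exp (l * t)
        = ∑ B ∈ P with t ≤ G B - μ, exp (l * t) := by rw [sum_const, nsmul_eq_mul]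
      _ ≤ ∑ B ∈ P with t ≤ G B - μ, exp (l * (G B - μ)) := sum_le_sum fun B hB =>
          exp_le_exp.2 (mul_le_mul_of_nonneg_left (mem_filter.1 hB).2 hl)
      _ ≤ ∑ B ∈ P, exp (l * (G B - μ)) :=
          sum_le_sum_of_subset_of_nonneg (filter_subset _ _) fun _ _ _ => (exp_pos _).le
      _ = #P * 𝔼 B ∈ P, exp (l * (G B - μ)) := (card_mul_expect _ _).symm
      _ ≤ #P * exp (2 * m * c ^ 2 * l ^ 2) := by
          gcongr; exact expect_powersetCard_exp_mul_sub_expect_le hG hc l s m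
  have hexponent : 2 * m * c ^ 2 * l ^ 2 + -(l * t) = -t ^ 2 / (8 * m * c ^ 2) := by
    simp only [l]; field_simp; ring
  calc (#{B ∈ P | t ≤ G B - μ} : ℝ)
      = #{B ∈ P | t ≤ G B - μ} * exp (l * t) * exp (-(l * t)) := by
        rw [mul_assoc, ← exp_add, add_neg_cancel, exp_zero, mul_one]
    _ ≤ #P * exp (2 * m * c ^ 2 * l ^ 2) * exp (-(l * t)) := by gcongr
    _ = #P * exp (-t ^ 2 / (8 * m * c ^ 2)) := by rw [mul_assoc, ← exp_add, hexponent]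

lemma card_filter_le_abs_sub_expect_le (hG : ∀ C v, |G (insert v C) - G C| ≤ c) (hc : 0 < c)
    (s : Finset α) {m : ℕ} (hm : 0 < m) {t : ℝ} (ht : 0 ≤ t) :
    (#{B ∈ s.powersetCard m | t ≤ |G B - 𝔼 C ∈ s.powersetCard m, G C|} : ℝ) ≤
      2 * #(s.powersetCard m) * exp (-t ^ 2 / (8 * m * c ^ 2)) := by
  have hneg : ∀ C v, |-G (insert v C) - -G C| ≤ c := fun C v => by
    rw [← abs_neg, neg_sub_neg, neg_sub]; exact hG C v
  have hupper := card_filter_le_sub_expect_le hG hc s hm ht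
  have hlower := card_filter_le_sub_expect_le (G := fun B => -G B) hneg hc s hm ht
  simp only [expect_neg_distrib, sub_neg_eq_add, neg_add_eq_sub] at hlower
  have hunion : #{B ∈ s.powersetCard m | t ≤ |G B - 𝔼 C ∈ s.powersetCard m, G C|} ≤
      #{B ∈ s.powersetCard m | t ≤ G B - 𝔼 C ∈ s.powersetCard m, G C} +
        #{B ∈ s.powersetCard m | t ≤ 𝔼 C ∈ s.powersetCard m, G C - G B} := by
    refine (card_le_card fun B hB => ?_).trans (card_union_le _ _)
    simp only [mem_filter, mem_union, le_abs, neg_sub] at hB ⊢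
    tauto
  calc (#{B ∈ s.powersetCard m | t ≤ |G B - 𝔼 C ∈ s.powersetCard m, G C|} : ℝ)
      ≤ #{B ∈ s.powersetCard m | t ≤ G B - 𝔼 C ∈ s.powersetCard m, G C} +
          #{B ∈ s.powersetCard m | t ≤ 𝔼 C ∈ s.powersetCard m, G C - G B} := by
        exact_mod_cast hunion
    _ ≤ 2 * #(s.powersetCard m) * exp (-t ^ 2 / (8 * m * c ^ 2)) := by linarith

end

section

variable {α : Type*} [DecidableEq α]

@[simps]
def boolIndicator : Finset α ↪ (α → Bool) where
  toFun B i := decide (i ∈ B)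
  inj' B B' h := by ext i; simpa using congrFun h i

lemma filter_card_eq_map_boolIndicator [Fintype α] (k : ℕ) :
    ({x | #{i | x i} = k} : Finset (α → Bool)) = (univ.powersetCard k).map boolIndicator := by
  ext x
  simp only [mem_filter, mem_univ, true_and, mem_map, mem_powersetCard, subset_univ]
  refine ⟨fun hx => ⟨univ.filter fun i => x i, hx, funext fun i => by simp⟩, ?_⟩
  rintro ⟨B, hB, rfl⟩
  simpa using hB

lemma abs_apply_boolIndicator_insert_sub_le {f : (α → Bool) → ℝ} {c : ℝ}
    (hf : ∀ x i, |f x - f (Function.update x i (!x i))| ≤ c) (C : Finset α) (v : α) :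
    |f (boolIndicator (insert v C)) - f (boolIndicator C)| ≤ c := by
  by_cases hv : v ∈ C
  · rw [insert_eq_of_mem hv, sub_self, abs_zero]
    exact (abs_nonneg _).trans (hf (boolIndicator C) v)
  convert hf (boolIndicator (insert v C)) v using 4
  ext i
  by_cases hi : i = v
  · subst hi; simp [hv]
  · simp [hi]

end

theorem conditioned_bernoulli_lipschitz_concentration_general
    (n k : ℕ) (hkpos : 0 < k)
    (S : Finset (Fin n → Bool))
    (hS : S = Finset.univ.filter (fun x => (Finset.univ.filter (fun i => x i)).card = k))
    (f : (Fin n → Bool) → ℝ)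
    (hlip : ∀ (x : Fin n → Bool) (i : Fin n), |f x - f (Function.update x i (!x i))| ≤ 1)
    (E : ℝ) (hE : E = (∑ x ∈ S, f x) / S.card)
    (t : ℝ) (ht : 0 < t) :
    ((S.filter (fun x => t ≤ |f x - E|)).card : ℝ) / S.card ≤
      2 * Real.exp (-t ^ 2 / (8 * k)) := by
  have hSmap : S = (univ.powersetCard k).map boolIndicator :=
    hS.trans (filter_card_eq_map_boolIndicator k)
  have hEexp : E = 𝔼 B ∈ univ.powersetCard k, f (boolIndicator B) := by
    rw [hE, hSmap, sum_map, card_map, expect_eq_sum_div_card]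
  rw [hSmap, filter_map, card_map, card_map, hEexp]
  simp only [Function.comp_def]
  refine div_le_of_le_mul₀ (by positivity) (by positivity) ?_
  have htail := card_filter_le_abs_sub_expect_le (G := fun B => f (boolIndicator B))
    (abs_apply_boolIndicator_insert_sub_le hlip) one_pos univ hkpos ht.le
  simp only [one_pow, mul_one] at htail
  linarith

/-- Concentration of a 1-Lipschitz function of Bernoullis conditioned on their
sum being `k`: `P[|f(X) - E f(X)| ≥ t] ≤ 2 exp (-t²/(8k))`. -/
theorem conditioned_bernoulli_lipschitz_concentration
    (n k : ℕ) (hk : k ≤ n) (hkpos : 0 < k)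
    (S : Finset (Fin n → Bool))
    (hS : S = Finset.univ.filter (fun x => (Finset.univ.filter (fun i => x i)).card = k))
    (f : (Fin n → Bool) → ℝ)
    (hlip : ∀ (x : Fin n → Bool) (i : Fin n), |f x - f (Function.update x i (!x i))| ≤ 1)
    (E : ℝ) (hE : E = (∑ x ∈ S, f x) / S.card)
    (t : ℝ) (ht : 0 < t) :
    ((S.filter (fun x => t ≤ |f x - E|)).card : ℝ) / S.card ≤
      2 * Real.exp (-t ^ 2 / (8 * k)) :=
  conditioned_bernoulli_lipschitz_concentration_general n k hkpos S hS f hlip E hE t ht
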